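/- Let U be a finite set of residues in Z/nZ with circular pairwise distance set W, and let Z ⊆ Z/nZ with U ⊆ Z. Suppose z_i, z_j ∈ Z satisfy: for all z_g, z_h ∈ Z, (z_g - z_h) = (z_i - z_j) in Z/nZ implies (z_g, z_h) = (z_i, z_j); and z_i - z_j ∈ W. Then z_i ∈ U and z_j ∈ U. -/

import Mathlib

theorem circular_unique_difference_in_support_general (n : ℕ) (U Z : Set (ZMod n))
    (hUZ : U ⊆ Z)
    (zi zj : ZMod n)
    (huniq : ∀ zg ∈ Z, ∀ zh ∈ Z, zg - zh = zi - zj → zg = zi ∧ zh = zj)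
    (hW : zi - zj ∈ {d : ZMod n | ∃ u ∈ U, ∃ v ∈ U, d = u - v}) :
    zi ∈ U ∧ zj ∈ U := by
  obtain ⟨u, hu, v, hv, hd⟩ := hW
  obtain ⟨rfl, rfl⟩ := huniq u (hUZ hu) v (hUZ hv) hd.symm
  exact ⟨hu, hv⟩

/-- Circular graph step: if `zi - zj` is uniquely realized among pairs of `Z ⊇ U` and
lies in the circular pairwise distance set of `U`, then `zi, zj ∈ U`. -/
theorem circular_unique_difference_in_support (n : ℕ) (U Z : Set (ZMod n))
    (hU : U.Finite) (hZ : Z.Finite) (hUZ : U ⊆ Z)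
    (zi zj : ZMod n) (hzi : zi ∈ Z) (hzj : zj ∈ Z)
    (huniq : ∀ zg ∈ Z, ∀ zh ∈ Z, zg - zh = zi - zj → zg = zi ∧ zh = zj)
    (hW : zi - zj ∈ {d : ZMod n | ∃ u ∈ U, ∃ v ∈ U, d = u - v}) :
    zi ∈ U ∧ zj ∈ U :=
  circular_unique_difference_in_support_general n U Z hUZ zi zj huniq hW
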